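/- arXiv:1410.2623 — 7 statements merged into one kernel-verified Lean document; each statement's English description precedes it below -/
import Mathlib

section
/- Let f(q) = ∑_{k=0}^∞ q^k a_k be a power series with quaternionic coefficients converging on the open unit ball B(0;1) of the quaternions. Fix an imaginary unit I (a quaternion with I² = -1), and suppose that Re[f'(q)] > 0 for all q in B(0;1), where f'(q) = ∑_{k=1}^∞ k q^{k-1} a_k. Then f is injective on the slice B(0;1) ∩ ℂ_I, where ℂ_I = {x + I y : x, y ∈ ℝ}. -/
/-! Two points `p ≠ q` of one slice commute, so along the segment `z t = p + t (q - p)` the series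
can be differentiated termwise, with `d/dt f (z t) = (q - p) f' (z t)`. Hence
`t ↦ Re ((q - p)⁻¹ f (z t))` has derivative `Re f' (z t) > 0` on `[0, 1]`, and the mean value
theorem gives `f p ≠ f q`. Termwise differentiation is justified by the majorant
`∑ n rⁿ⁻¹ ‖aₙ‖` for `r < 1`, which converges because in the finite-dimensional space `ℍ`
summability is absolute. -/

open Set Metric AffineMap
open scoped Quaternion

section PowerSeriesAlongLine

variable {A : Type*} [NormedRing A]

theorem HasDerivAt.pow_of_commute [NormedAlgebra ℝ A] {z : ℝ → A} {d : A} {t : ℝ}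
    (hz : HasDerivAt z d t) (hc : Commute d (z t)) (n : ℕ) :
    HasDerivAt (fun s => z s ^ n) ((n : ℝ) • (d * z t ^ (n - 1))) t := by
  convert hz.fun_pow' n using 1
  rw [Finset.sum_congr rfl fun i hi => ?_, Finset.sum_const, Finset.card_range,
    Nat.cast_smul_eq_nsmul]
  rw [← (hc.pow_right _).eq, mul_assoc, ← pow_add, Nat.pred_eq_sub_one,
    Nat.sub_add_cancel (Nat.le_sub_one_of_lt (Finset.mem_range.1 hi))]

theorem norm_smul_pow_mul_le [NormedAlgebra ℝ A] [NormOneClass A] {x : A} {r : ℝ}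
    (hx : ‖x‖ ≤ r) (b : A) (n : ℕ) :
    ‖(n : ℝ) • (x ^ (n - 1) * b)‖ ≤ n * r ^ (n - 1) * ‖b‖ := by
  rw [norm_smul, Real.norm_natCast, mul_assoc]
  gcongr
  exact (norm_mul_le _ _).trans (by gcongr; exact (norm_pow_le x _).trans (by gcongr))

theorem summable_pow_mul_of_summable_norm_deriv [NormOneClass A] [CompleteSpace A]
    {a : ℕ → A} {r : ℝ} (ha : Summable fun n : ℕ => n * r ^ (n - 1) * ‖a n‖) {x : A}
    (hx : ‖x‖ ≤ r) :
    Summable fun n => x ^ n * a n := by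
  have hr : 0 ≤ r := (norm_nonneg x).trans hx
  refine .of_norm_bounded_eventually_nat (ha.mul_left r) ?_
  filter_upwards [Filter.eventually_ge_atTop 1] with n hn
  calc ‖x ^ n * a n‖ ≤ r ^ n * ‖a n‖ :=
        (norm_mul_le _ _).trans (by gcongr; exact (norm_pow_le x n).trans (by gcongr))
    _ = r * (1 * r ^ (n - 1) * ‖a n‖) := by
          rw [one_mul, ← mul_assoc, ← pow_succ', Nat.sub_add_cancel hn]
    _ ≤ r * (n * r ^ (n - 1) * ‖a n‖) := by gcongr; exact_mod_cast hn

variable [NormedAlgebra ℝ A] [NormOneClass A] [CompleteSpace A]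

theorem hasDerivAt_tsum_pow_mul {a : ℕ → A} {r : ℝ}
    (ha : Summable fun n : ℕ => n * r ^ (n - 1) * ‖a n‖) {z : ℝ → A} {d : A} {s : Set ℝ}
    (hs : IsOpen s) (hs' : IsPreconnected s) (hz : ∀ t ∈ s, HasDerivAt z d t)
    (hc : ∀ t ∈ s, Commute d (z t)) (hzr : ∀ t ∈ s, ‖z t‖ ≤ r) {t : ℝ} (ht : t ∈ s) :
    HasDerivAt (fun t => ∑' n, z t ^ n * a n)
      (d * ∑' n : ℕ, (n : ℝ) • (z t ^ (n - 1) * a n)) t := by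
  have hderiv : Summable fun n : ℕ => (n : ℝ) • (z t ^ (n - 1) * a n) :=
    .of_norm_bounded ha fun n => norm_smul_pow_mul_le (hzr t ht) (a n) n
  rw [← hderiv.tsum_mul_left]
  refine hasDerivAt_tsum_of_isPreconnected (g := fun n t => z t ^ n * a n)
    (g' := fun n t => d * ((n : ℝ) • (z t ^ (n - 1) * a n))) (ha.mul_left ‖d‖) hs hs'
    (fun n t ht => ?_) (fun n t ht => ?_) ht
    (summable_pow_mul_of_summable_norm_deriv ha (hzr t ht)) ht
  · refine (((hz t ht).pow_of_commute (hc t ht) n).mul_const (a n)).congr_deriv ?_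
    rw [smul_mul_assoc, mul_assoc, mul_smul_comm]
  · calc _ ≤ ‖d‖ * ‖(n : ℝ) • (z t ^ (n - 1) * a n)‖ := norm_mul_le _ _
      _ ≤ _ := by gcongr; exact norm_smul_pow_mul_le (hzr t ht) (a n) n

theorem hasDerivAt_tsum_pow_mul_lineMap {a : ℕ → A} {r : ℝ}
    (ha : Summable fun n : ℕ => n * r ^ (n - 1) * ‖a n‖) {p q : A} (hpq : Commute p q) {t : ℝ}
    (ht : ‖lineMap p q t‖ < r) :
    HasDerivAt (fun t => ∑' n, lineMap p q t ^ n * a n)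
      ((q - p) * ∑' n : ℕ, (n : ℝ) • (lineMap p q t ^ (n - 1) * a n)) t := by
  refine hasDerivAt_tsum_pow_mul ha (s := lineMap p q ⁻¹' ball 0 r)
    (isOpen_ball.preimage lineMap_continuous) ?_
    (fun t _ => hasDerivAt_lineMap) (fun t _ => ?_) (fun t ht => (mem_ball_zero_iff.1 ht).le)
    (mem_ball_zero_iff.2 ht)
  · exact ((convex_ball 0 r).affine_preimage (lineMap p q)).isPreconnected
  · rw [lineMap_apply_module]
    exact ((hpq.symm.sub_left (.refl p)).smul_right _).add_right
      (((Commute.refl q).sub_left hpq).smul_right _)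

end PowerSeriesAlongLine

namespace Quaternion

theorem commute_coe_add_smul (I : ℍ) (x y x' y' : ℝ) :
    Commute ((x : ℍ) + y • I) ((x' : ℍ) + y' • I) :=
  (coe_commute x _).add_left <| (coe_commute x' _).symm.add_right <|
    ((Commute.refl I).smul_left y).smul_right y'

theorem summable_norm_of_summable_smul_pow_mul {a : ℕ → ℍ} {r : ℝ} (hr : 0 ≤ r)
    (h : Summable fun k : ℕ => (k : ℝ) • ((r : ℍ) ^ (k - 1) * a k)) :
    Summable fun n : ℕ => n * r ^ (n - 1) * ‖a n‖ := by
  refine (summable_norm_iff.2 h).congr fun n => ?_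
  rw [norm_smul, norm_mul, norm_pow, norm_coe, Real.norm_natCast, Real.norm_of_nonneg hr,
    mul_assoc]

theorem hasDerivAt_re {f : ℝ → ℍ} {f' : ℍ} {t : ℝ} (h : HasDerivAt f f' t) :
    HasDerivAt (fun t => (f t).re) f'.re t :=
  (show ℍ →ₗ[ℝ] ℝ from QuaternionAlgebra.reₗ _ _ _).toContinuousLinearMap.hasFDerivAt
    |>.comp_hasDerivAt t h

end Quaternion

theorem stmt0_general (a : ℕ → Quaternion ℝ) (I : Quaternion ℝ)
    (hconv' : ∀ q : Quaternion ℝ, ‖q‖ < 1 →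
      Summable (fun k : ℕ => (k : ℝ) • (q ^ (k - 1) * a k)))
    (hpos : ∀ q : Quaternion ℝ, ‖q‖ < 1 →
      0 < (∑' k : ℕ, (k : ℝ) • (q ^ (k - 1) * a k)).re) :
    Set.InjOn (fun q : Quaternion ℝ => ∑' k : ℕ, q ^ k * a k)
      {q : Quaternion ℝ | ‖q‖ < 1 ∧ ∃ x y : ℝ, q = (x : Quaternion ℝ) + y • I} := by
  rintro p ⟨hp, xp, yp, hpI⟩ q ⟨hq, xq, yq, hqI⟩ hfpq
  by_contra hne
  have hpq : Commute p q := hpI ▸ hqI ▸ Quaternion.commute_coe_add_smul I xp yp xq yq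
  obtain ⟨r, hpqr, hr1⟩ := exists_between (max_lt hp hq)
  have hr : 0 ≤ r := (norm_nonneg p).trans ((le_max_left _ _).trans hpqr.le)
  have ha := Quaternion.summable_norm_of_summable_smul_pow_mul hr
    (hconv' r (by rwa [Quaternion.norm_coe, Real.norm_of_nonneg hr]))
  have hseg : ∀ t ∈ Icc (0 : ℝ) 1, ‖lineMap p q t‖ < r := fun t ht =>
    mem_ball_zero_iff.1 <| (convex_ball 0 r).lineMap_mem
      (mem_ball_zero_iff.2 ((le_max_left _ _).trans_lt hpqr))
      (mem_ball_zero_iff.2 ((le_max_right _ _).trans_lt hpqr)) ht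
  have hψ : ∀ t ∈ Icc (0 : ℝ) 1, HasDerivAt
      (fun t => ((q - p)⁻¹ * ∑' n, lineMap p q t ^ n * a n).re)
      (∑' n : ℕ, (n : ℝ) • (lineMap p q t ^ (n - 1) * a n)).re t := fun t ht => by
    have := (hasDerivAt_tsum_pow_mul_lineMap ha hpq (hseg t ht)).const_mul (q - p)⁻¹
    rw [← mul_assoc, inv_mul_cancel₀ (sub_ne_zero.2 (Ne.symm hne)), one_mul] at this
    exact Quaternion.hasDerivAt_re this
  obtain ⟨c, hc, hslope⟩ := exists_hasDerivAt_eq_slope _ _ zero_lt_one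
    (fun t ht => (hψ t ht).continuousAt.continuousWithinAt)
    (fun t ht => hψ t (Ioo_subset_Icc_self ht))
  rw [lineMap_apply_zero, lineMap_apply_one,
    ← show ∑' n, p ^ n * a n = ∑' n, q ^ n * a n from hfpq, sub_self, zero_div] at hslope
  exact (hpos _ (hseg c (Ioo_subset_Icc_self hc) |>.trans hr1)).ne' hslope

/-- If a quaternionic power series `f(q) = ∑ qᵏ aₖ` converges on the unit ball and the
real part of its slice derivative is positive there, then `f` is injective on the slice
`B(0;1) ∩ ℂ_I` for any imaginary unit `I`. -/
theorem stmt0 (a : ℕ → Quaternion ℝ) (I : Quaternion ℝ) (hI : I ^ 2 = -1)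
    (hconv : ∀ q : Quaternion ℝ, ‖q‖ < 1 → Summable (fun k : ℕ => q ^ k * a k))
    (hconv' : ∀ q : Quaternion ℝ, ‖q‖ < 1 →
      Summable (fun k : ℕ => (k : ℝ) • (q ^ (k - 1) * a k)))
    (hpos : ∀ q : Quaternion ℝ, ‖q‖ < 1 →
      0 < (∑' k : ℕ, (k : ℝ) • (q ^ (k - 1) * a k)).re) :
    Set.InjOn (fun q : Quaternion ℝ => ∑' k : ℕ, q ^ k * a k)
      {q : Quaternion ℝ | ‖q‖ < 1 ∧ ∃ x y : ℝ, q = (x : Quaternion ℝ) + y • I} :=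
  stmt0_general a I hconv' hpos
end

section
/- Let z₁ ≠ z₂ lie in the same slice ℂ_I of the quaternions, let z(t) = t z₂ + (1-t) z₁ for t ∈ [0,1], and let f(q) = ∑_{k=0}^∞ q^k a_k be a quaternionic power series converging on a ball containing the segment [z₁,z₂]. Then f(z₂) - f(z₁) = (z₂ - z₁) · ∫₀¹ f'(z(t)) dt, where f'(q) = ∑_{k≥1} k q^{k-1} a_k. -/
/-!
Points of one slice `ℂ_I` commute, so along the segment `w t = t • z₂ + (1 - t) • z₁` the
velocity `z₂ - z₁` commutes with `w t` and `d/dt (w t ^ k) = (z₂ - z₁) * k * w t ^ (k - 1)`.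
The fundamental theorem of calculus gives the identity for each monomial, and the series are
summed under the integral by dominated convergence: the segment lies in the closed ball of
radius `r = max ‖z₁‖ ‖z₂‖ < R`, where `∑ k r^(k-1) ‖a k‖` is a summable majorant.
-/

open MeasureTheory

theorem Quaternion.commute_coe_add_smul_s1 (I : Quaternion ℝ) (x y x' y' : ℝ) :
    Commute ((x : Quaternion ℝ) + y • I) ((x' : Quaternion ℝ) + y' • I) :=
  (Quaternion.coe_commute x _).add_left
    ((Quaternion.coe_commute x' _).symm.add_right (((Commute.refl I).smul_left y).smul_right y'))

section NormedAlgebra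

variable {𝔸 : Type*} [NormedRing 𝔸] [NormedAlgebra ℝ 𝔸]

theorem HasDerivAt.fun_pow_of_commute {f : ℝ → 𝔸} {f' : 𝔸} {x : ℝ} (h : HasDerivAt f f' x)
    (hc : Commute (f x) f') (n : ℕ) :
    HasDerivAt (fun x ↦ f x ^ n) (n • (f x ^ (n - 1) * f')) x := by
  convert h.fun_pow' n using 1
  rw [← Finset.card_range n, ← Finset.sum_const, Finset.card_range]
  refine Finset.sum_congr rfl fun i hi ↦ ?_
  rw [mul_assoc, ← (hc.pow_left i).eq, ← mul_assoc, ← pow_add, Nat.pred_eq_sub_one,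
    Nat.sub_add_cancel (Nat.le_sub_one_of_lt (Finset.mem_range.1 hi))]

theorem norm_smul_add_one_sub_smul_le {a b : 𝔸} {r t : ℝ} (ha : ‖a‖ ≤ r) (hb : ‖b‖ ≤ r)
    (ht : t ∈ Set.Icc (0 : ℝ) 1) : ‖t • b + (1 - t) • a‖ ≤ r := by
  simpa using (convex_closedBall (0 : 𝔸) r) (x := b) (y := a) (by simpa using hb)
    (by simpa using ha) ht.1 (sub_nonneg.2 ht.2) (add_sub_cancel t 1)

variable [CompleteSpace 𝔸]

theorem pow_mul_sub_pow_mul_eq_mul_integral {a b : 𝔸} (hab : Commute a b) (c : 𝔸) (k : ℕ) :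
    b ^ k * c - a ^ k * c =
      (b - a) * ∫ t in (0 : ℝ)..1, (k : ℝ) • ((t • b + (1 - t) • a) ^ (k - 1) * c) := by
  set w : ℝ → 𝔸 := fun t ↦ t • b + (1 - t) • a
  have hw : ∀ t, HasDerivAt w (b - a) t := fun t ↦ by
    refine (((hasDerivAt_id t).smul_const b).fun_add
      (((hasDerivAt_id t).const_sub 1).smul_const a)).congr_deriv ?_
    simp [sub_eq_add_neg]
  have hcomm : ∀ t, Commute (w t) (b - a) := fun t ↦
    ((((Commute.refl b).sub_right hab.symm).smul_left t).add_left
      ((hab.sub_right (Commute.refl a)).smul_left (1 - t)))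
  have hderiv : ∀ t ∈ Set.uIcc (0 : ℝ) 1, HasDerivAt (fun s ↦ w s ^ k * c)
      ((b - a) * ((k : ℝ) • (w t ^ (k - 1) * c))) t := fun t _ ↦ by
    convert ((hw t).fun_pow_of_commute (hcomm t) k).mul_const c using 1
    rw [Nat.cast_smul_eq_nsmul, mul_smul_comm, smul_mul_assoc, ← mul_assoc,
      ((hcomm t).pow_left (k - 1)).eq, mul_assoc]
  have hint : IntervalIntegrable (fun t ↦ (k : ℝ) • (w t ^ (k - 1) * c)) volume 0 1 :=
    (by fun_prop : Continuous _).intervalIntegrable 0 1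
  have hmul := (ContinuousLinearMap.mul ℝ 𝔸 (b - a)).intervalIntegral_comp_comm hint
  simp only [ContinuousLinearMap.mul_apply'] at hmul
  have hint' : IntervalIntegrable (fun t ↦ (b - a) * ((k : ℝ) • (w t ^ (k - 1) * c))) volume 0 1 :=
    (by fun_prop : Continuous _).intervalIntegrable 0 1
  rw [← hmul, intervalIntegral.integral_eq_sub_of_hasDerivAt hderiv hint']
  simp [w]

theorem tsum_pow_mul_sub_tsum_pow_mul_eq_mul_integral [NormOneClass 𝔸] {a b : 𝔸}
    (hab : Commute a b) {c : ℕ → 𝔸} {r : ℝ} (ha : ‖a‖ ≤ r) (hb : ‖b‖ ≤ r)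
    (hsa : Summable fun k ↦ a ^ k * c k)
    (hsb : Summable fun k ↦ b ^ k * c k) (hc : Summable fun k : ℕ ↦ k * (r ^ (k - 1) * ‖c k‖)) :
    (∑' k, b ^ k * c k) - ∑' k, a ^ k * c k =
      (b - a) * ∫ t in (0 : ℝ)..1, ∑' k : ℕ, (k : ℝ) • ((t • b + (1 - t) • a) ^ (k - 1) * c k) := by
  have hbound : ∀ (k : ℕ) (t : ℝ), t ∈ Set.uIoc (0 : ℝ) 1 →
      ‖(k : ℝ) • ((t • b + (1 - t) • a) ^ (k - 1) * c k)‖ ≤ k * (r ^ (k - 1) * ‖c k‖) := by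
    intro k t ht
    rw [Set.uIoc_of_le zero_le_one] at ht
    have hw := norm_smul_add_one_sub_smul_le ha hb (Set.Ioc_subset_Icc_self ht)
    rw [norm_smul, Real.norm_natCast]
    gcongr
    exact (norm_mul_le _ _).trans (by gcongr; exact (norm_pow_le _ _).trans (by gcongr))
  have hswap := intervalIntegral.hasSum_integral_of_dominated_convergence (μ := volume)
    (fun k _ ↦ k * (r ^ (k - 1) * ‖c k‖))
    (fun k ↦ (by fun_prop : Continuous _).aestronglyMeasurable)
    (fun k ↦ ae_of_all _ (hbound k)) (ae_of_all _ fun _ _ ↦ hc) intervalIntegrable_const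
    (ae_of_all _ fun t ht ↦ (hc.of_norm_bounded fun k ↦ hbound k t ht).hasSum)
  refine (hsb.hasSum.sub hsa.hasSum).unique ?_
  simp only [pow_mul_sub_pow_mul_eq_mul_integral hab]
  exact hswap.mul_left (b - a)

end NormedAlgebra

theorem stmt1_general (a : ℕ → Quaternion ℝ) (I : Quaternion ℝ)
    (z₁ z₂ : Quaternion ℝ)
    (hz₁ : ∃ x y : ℝ, z₁ = (x : Quaternion ℝ) + y • I)
    (hz₂ : ∃ x y : ℝ, z₂ = (x : Quaternion ℝ) + y • I)
    (R : ℝ)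
    (hseg : ∀ t : ℝ, t ∈ Set.Icc (0 : ℝ) 1 → ‖(t : ℝ) • z₂ + (1 - t) • z₁‖ < R)
    (hconv : ∀ q : Quaternion ℝ, ‖q‖ < R → Summable (fun k : ℕ => q ^ k * a k))
    (hconv' : ∀ q : Quaternion ℝ, ‖q‖ < R →
      Summable (fun k : ℕ => (k : ℝ) • (q ^ (k - 1) * a k))) :
    (∑' k : ℕ, z₂ ^ k * a k) - (∑' k : ℕ, z₁ ^ k * a k) =
      (z₂ - z₁) * ∫ t in (0 : ℝ)..1,
        ∑' k : ℕ, (k : ℝ) • (((t : ℝ) • z₂ + (1 - t) • z₁) ^ (k - 1) * a k) := by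
  have hcomm : Commute z₁ z₂ := by
    obtain ⟨x₁, y₁, rfl⟩ := hz₁
    obtain ⟨x₂, y₂, rfl⟩ := hz₂
    exact Quaternion.commute_coe_add_smul_s1 I x₁ y₁ x₂ y₂
  have h₁ : ‖z₁‖ < R := by simpa using hseg 0 (by simp)
  have h₂ : ‖z₂‖ < R := by simpa using hseg 1 (by simp)
  have hr : 0 ≤ max ‖z₁‖ ‖z₂‖ := (norm_nonneg _).trans (le_max_left _ _)
  have hsum := (hconv' (max ‖z₁‖ ‖z₂‖ : ℝ) (by simpa [abs_of_nonneg hr] using max_lt h₁ h₂)).norm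
  simp only [norm_smul, norm_mul, norm_pow, Real.norm_natCast, Quaternion.norm_coe,
    Real.norm_of_nonneg hr] at hsum
  exact tsum_pow_mul_sub_tsum_pow_mul_eq_mul_integral hcomm (le_max_left _ _) (le_max_right _ _)
    (hconv _ h₁) (hconv _ h₂) hsum

/-- For `z₁ ≠ z₂` in the same slice `ℂ_I` and a quaternionic power series converging on a
ball containing the segment `[z₁, z₂]`, one has
`f(z₂) - f(z₁) = (z₂ - z₁) · ∫₀¹ f'(z(t)) dt`. -/
theorem stmt1 (a : ℕ → Quaternion ℝ) (I : Quaternion ℝ) (hI : I ^ 2 = -1)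
    (z₁ z₂ : Quaternion ℝ) (hz : z₁ ≠ z₂)
    (hz₁ : ∃ x y : ℝ, z₁ = (x : Quaternion ℝ) + y • I)
    (hz₂ : ∃ x y : ℝ, z₂ = (x : Quaternion ℝ) + y • I)
    (R : ℝ)
    (hseg : ∀ t : ℝ, t ∈ Set.Icc (0 : ℝ) 1 → ‖(t : ℝ) • z₂ + (1 - t) • z₁‖ < R)
    (hconv : ∀ q : Quaternion ℝ, ‖q‖ < R → Summable (fun k : ℕ => q ^ k * a k))
    (hconv' : ∀ q : Quaternion ℝ, ‖q‖ < R →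
      Summable (fun k : ℕ => (k : ℝ) • (q ^ (k - 1) * a k))) :
    (∑' k : ℕ, z₂ ^ k * a k) - (∑' k : ℕ, z₁ ^ k * a k) =
      (z₂ - z₁) * ∫ t in (0 : ℝ)..1,
        ∑' k : ℕ, (k : ℝ) • (((t : ℝ) • z₂ + (1 - t) • z₁) ^ (k - 1) * a k) :=
  stmt1_general a I z₁ z₂ hz₁ hz₂ R hseg hconv hconv'
end

section
/- Let f(q) = ∑_{n=0}^∞ q^n a_n be a quaternionic power series with all coefficients a_n real, converging on B(0;1) and injective on B(0;1) ∩ ℂ_I for one imaginary unit I. Then f is injective on all of B(0;1). -/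
/-!
Every quaternion is `x + yJ` with `y ≥ 0` for some imaginary unit `J`, and on each slice `ℂ_J`
the series acts as the same complex function `F(z) = ∑ zⁿ aₙ`, i.e. `f ∘ φ_J = φ_J ∘ F` for the
embedding `φ_J = Complex.liftAux J`. Injectivity on `ℂ_I` makes `F` injective on the disc, and real
coefficients give `F(z̄) = conj F(z)`. If `f(φ_J z) = f(φ_K w)`, comparing real parts and norms
gives `F z = F w` or `F z = F w̄`, hence `z = w` because both lie in the closed upper half-plane.
Then `φ_J (F z) = φ_K (F z)` forces `J = K` unless `F z` is real, and `F z` real means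
`F z̄ = F z`, i.e. `z` is real.
-/

open Quaternion

noncomputable def realPowerSeries {A : Type*} [Ring A] [Algebra ℝ A] [TopologicalSpace A]
    (a : ℕ → ℝ) (q : A) : A :=
  ∑' n, q ^ n * algebraMap ℝ A (a n)

theorem AlgHom.map_realPowerSeries {A B : Type*} [Ring A] [Algebra ℝ A] [TopologicalSpace A]
    [Ring B] [Algebra ℝ B] [TopologicalSpace B] [T2Space B] (φ : A →ₐ[ℝ] B) (hφ : Continuous φ)
    (a : ℕ → ℝ) {z : A} (hz : Summable fun n => z ^ n * algebraMap ℝ A (a n)) :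
    φ (realPowerSeries a z) = realPowerSeries a (φ z) := by
  simp only [realPowerSeries, ← (hz.hasSum.map φ hφ).tsum_eq, Function.comp_def, map_mul, map_pow,
    AlgHom.commutes]

theorem Complex.realPowerSeries_conj (a : ℕ → ℝ) {z : ℂ}
    (hz : Summable fun n => z ^ n * algebraMap ℝ ℂ (a n)) :
    realPowerSeries a (starRingEnd ℂ z) = starRingEnd ℂ (realPowerSeries a z) :=
  (conjAe.toAlgHom.map_realPowerSeries continuous_conj a hz).symm

namespace Quaternion

variable {J K : ℍ}

theorem norm_eq_one_of_mul_self_eq_neg_one (hJ : J * J = -1) : ‖J‖ = 1 := by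
  have h : ‖J‖ * ‖J‖ = 1 := by rw [← norm_mul, hJ, norm_neg, norm_one]
  nlinarith [norm_nonneg J]

theorem re_eq_zero_of_mul_self_eq_neg_one (hJ : J * J = -1) : J.re = 0 := by
  have hnorm : normSq J = 1 := by
    rw [normSq_eq_norm_mul_self, norm_eq_one_of_mul_self_eq_neg_one hJ, mul_one]
  rw [← sq_eq_neg_normSq, hnorm, sq, hJ, coe_one]

theorem re_liftAux (hJ : J * J = -1) (z : ℂ) : (Complex.liftAux J hJ z).re = z.re := by
  simp [Complex.liftAux_apply, re_eq_zero_of_mul_self_eq_neg_one hJ, algebraMap_def]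

theorem star_liftAux (hJ : J * J = -1) (z : ℂ) :
    star (Complex.liftAux J hJ z) = Complex.liftAux J hJ (starRingEnd ℂ z) := by
  have hstar : star J = -J := star_eq_neg.2 (re_eq_zero_of_mul_self_eq_neg_one hJ)
  simp [Complex.liftAux_apply, hstar, algebraMap_def]

theorem norm_liftAux (hJ : J * J = -1) (z : ℂ) : ‖Complex.liftAux J hJ z‖ = ‖z‖ := by
  have h : normSq (Complex.liftAux J hJ z) = Complex.normSq z := by
    apply coe_injective
    rw [← self_mul_star, star_liftAux, ← map_mul, Complex.mul_conj]
    exact (Complex.liftAux J hJ).commutes _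
  rw [← sq_eq_sq₀ (norm_nonneg _) (norm_nonneg _), sq, sq, ← normSq_eq_norm_mul_self, h,
    Complex.normSq_eq_norm_sq, sq]

theorem liftAux_mem_ball_zero_iff (hJ : J * J = -1) {z : ℂ} {r : ℝ} :
    Complex.liftAux J hJ z ∈ Metric.ball 0 r ↔ z ∈ Metric.ball 0 r := by
  rw [mem_ball_zero_iff, mem_ball_zero_iff, norm_liftAux]

theorem liftAux_eq_liftAux_iff (hJ : J * J = -1) (hK : K * K = -1) (z : ℂ) :
    Complex.liftAux J hJ z = Complex.liftAux K hK z ↔ z.im = 0 ∨ J = K := by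
  rw [Complex.liftAux_apply, Complex.liftAux_apply, add_right_inj]
  by_cases hz : z.im = 0
  · simp [hz]
  · simp [hz, smul_right_inj hz]

theorem eq_or_eq_conj_of_liftAux_eq_liftAux (hJ : J * J = -1) (hK : K * K = -1) {u v : ℂ}
    (h : Complex.liftAux J hJ u = Complex.liftAux K hK v) : u = v ∨ u = starRingEnd ℂ v := by
  have hre : u.re = v.re := by rw [← re_liftAux hJ, ← re_liftAux hK, h]
  have hnorm : ‖u‖ = ‖v‖ := by rw [← norm_liftAux hJ, ← norm_liftAux hK, h]
  have him : u.im ^ 2 = v.im ^ 2 := by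
    have := congrArg (· ^ 2) hnorm
    simp only [← Complex.normSq_eq_norm_sq, Complex.normSq_apply, hre] at this
    nlinarith
  rcases sq_eq_sq_iff_eq_or_eq_neg.1 him with him | him
  · exact .inl (Complex.ext hre him)
  · exact .inr (Complex.ext hre (by simpa using him))

theorem exists_liftAux_eq (q : ℍ) :
    ∃ (J : ℍ) (hJ : J * J = -1) (z : ℂ), 0 ≤ z.im ∧ Complex.liftAux J hJ z = q := by
  by_cases him : q.im = 0
  · have hi : (⟨0, 1, 0, 0⟩ : ℍ) * ⟨0, 1, 0, 0⟩ = -1 := by ext <;> simp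
    obtain ⟨I, hI⟩ : ∃ I : ℍ, I * I = -1 := ⟨_, hi⟩
    refine ⟨I, hI, q.re, by simp, ?_⟩
    rw [Complex.liftAux_apply]
    conv_rhs => rw [← q.re_add_im, him]
    simp [algebraMap_def]
  · have hr : ‖q.im‖ ≠ 0 := norm_ne_zero_iff.2 him
    have hsq : q.im * q.im = -((normSq q.im : ℝ) : ℍ) := by
      rw [← pow_two]
      exact sq_eq_neg_normSq.2 (re_im q)
    refine ⟨‖q.im‖⁻¹ • q.im, ?_, ⟨q.re, ‖q.im‖⟩, norm_nonneg _, ?_⟩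
    · rw [smul_mul_smul_comm, hsq, normSq_eq_norm_mul_self, smul_neg,
        show ((‖q.im‖ * ‖q.im‖ : ℝ) : ℍ) = (‖q.im‖ * ‖q.im‖) • (1 : ℍ) by ext <;> simp, smul_smul]
      field_simp
      simp
    · rw [Complex.liftAux_apply, smul_smul, mul_inv_cancel₀ hr, one_smul, algebraMap_def, re_add_im]

theorem liftAux_eq_liftAux_of_apply_eq {g : ℂ → ℂ} {S : Set ℂ} (hg : Set.InjOn g S)
    (hS : ∀ z ∈ S, starRingEnd ℂ z ∈ S) (hconj : ∀ z ∈ S, g (starRingEnd ℂ z) = starRingEnd ℂ (g z))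
    (hJ : J * J = -1) (hK : K * K = -1) {z w : ℂ} (hz : z ∈ S) (hw : w ∈ S)
    (hz₀ : 0 ≤ z.im) (hw₀ : 0 ≤ w.im)
    (h : Complex.liftAux J hJ (g z) = Complex.liftAux K hK (g w)) :
    Complex.liftAux J hJ z = Complex.liftAux K hK w := by
  have hzw : z = w := by
    rcases eq_or_eq_conj_of_liftAux_eq_liftAux hJ hK h with h' | h'
    · exact hg hz hw h'
    · have hzw : z = starRingEnd ℂ w := hg hz (hS w hw) (by rw [h', hconj w hw])
      have him : z.im = -w.im := by rw [hzw, Complex.conj_im]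
      have hw' : starRingEnd ℂ w = w := Complex.conj_eq_iff_im.2 (by linarith)
      rwa [hw'] at hzw
  subst hzw
  rw [liftAux_eq_liftAux_iff] at h ⊢
  refine h.imp_left fun hg₀ => ?_
  have hz_real : starRingEnd ℂ z = z :=
    hg (hS z hz) hz (by rw [hconj z hz, Complex.conj_eq_iff_im.2 hg₀])
  exact Complex.conj_eq_iff_im.1 hz_real

theorem summable_of_summable_liftAux (hJ : J * J = -1) (a : ℕ → ℝ) {z : ℂ}
    (h : Summable fun n => Complex.liftAux J hJ z ^ n * algebraMap ℝ ℍ (a n)) :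
    Summable fun n => z ^ n * algebraMap ℝ ℂ (a n) := by
  refine Summable.of_norm ?_
  convert h.norm using 2 with n
  rw [← norm_liftAux hJ, map_mul, map_pow, AlgHom.commutes]

theorem realPowerSeries_liftAux (hJ : J * J = -1) (a : ℕ → ℝ) {z : ℂ}
    (h : Summable fun n => Complex.liftAux J hJ z ^ n * algebraMap ℝ ℍ (a n)) :
    realPowerSeries a (Complex.liftAux J hJ z) = Complex.liftAux J hJ (realPowerSeries a z) :=
  ((Complex.liftAux J hJ).map_realPowerSeries
    (Complex.liftAux J hJ).toLinearMap.continuous_of_finiteDimensional a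
    (summable_of_summable_liftAux hJ a h)).symm

end Quaternion

/-- A quaternionic power series with real coefficients converging on the unit ball which is
injective on one slice `B(0;1) ∩ ℂ_I` is injective on all of `B(0;1)`. -/
theorem stmt3 (a : ℕ → ℝ)
    (hconv : ∀ q : Quaternion ℝ, ‖q‖ < 1 →
      Summable (fun n : ℕ => q ^ n * ((a n : ℝ) : Quaternion ℝ)))
    (I : Quaternion ℝ) (hI : I ^ 2 = -1)
    (hinj : Set.InjOn (fun q : Quaternion ℝ => ∑' n : ℕ, q ^ n * ((a n : ℝ) : Quaternion ℝ))
      {q : Quaternion ℝ | ‖q‖ < 1 ∧ ∃ x y : ℝ, q = (x : Quaternion ℝ) + y • I}) :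
    Set.InjOn (fun q : Quaternion ℝ => ∑' n : ℕ, q ^ n * ((a n : ℝ) : Quaternion ℝ))
      (Metric.ball (0 : Quaternion ℝ) 1) := by
  have hI' : I * I = -1 := by rwa [← sq]
  have hsum {J : ℍ} (hJ : J * J = -1) {z : ℂ} (hz : z ∈ Metric.ball 0 1) :
      Summable fun n => Complex.liftAux J hJ z ^ n * algebraMap ℝ ℍ (a n) :=
    hconv _ (mem_ball_zero_iff.1 ((liftAux_mem_ball_zero_iff hJ).2 hz))
  have hmap {J : ℍ} (hJ : J * J = -1) {z : ℂ} (hz : z ∈ Metric.ball 0 1) :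
      realPowerSeries a (Complex.liftAux J hJ z) = Complex.liftAux J hJ (realPowerSeries a z) :=
    realPowerSeries_liftAux hJ a (hsum hJ hz)
  have hF : Set.InjOn (realPowerSeries a) (Metric.ball (0 : ℂ) 1) := by
    intro z hz w hw h
    have hslice {u : ℂ} (hu : u ∈ Metric.ball 0 1) : Complex.liftAux I hI' u ∈
        {q : ℍ | ‖q‖ < 1 ∧ ∃ x y : ℝ, q = (x : ℍ) + y • I} :=
      ⟨mem_ball_zero_iff.1 ((liftAux_mem_ball_zero_iff hI').2 hu), u.re, u.im,
        Complex.liftAux_apply _ _ _⟩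
    have hzw := hinj (hslice hz) (hslice hw) (by
      change realPowerSeries a _ = realPowerSeries a _
      rw [hmap hI' hz, hmap hI' hw, h])
    exact (Complex.liftAux I hI').toRingHom.injective hzw
  change Set.InjOn (realPowerSeries a) _
  rintro p hp q hq hpq
  obtain ⟨J, hJ, z, hz₀, rfl⟩ := exists_liftAux_eq p
  obtain ⟨K, hK, w, hw₀, rfl⟩ := exists_liftAux_eq q
  rw [liftAux_mem_ball_zero_iff] at hp hq
  rw [hmap hJ hp, hmap hK hq] at hpq
  exact liftAux_eq_liftAux_of_apply_eq hF (fun z hz => by simpa using hz)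
    (fun z hz => Complex.realPowerSeries_conj a (summable_of_summable_liftAux hI' a (hsum hI' hz)))
    hJ hK hp hq hz₀ hw₀ hpq
end

section
/- The function f(q) = -2 + 2∑_{k=1}^∞ q^k / k (a quaternionic power series converging on the open unit ball B(0;1) of ℍ) is injective on B(0;1). -/
/-!
Every quaternion `q` lies in a complex slice: if `I` is a unit imaginary quaternion parallel to
`q.im`, the embedding `ℂ →ₐ[ℝ] ℍ` sending `i` to `I` maps `z = q.re + ‖q.im‖ i`, which has the
same norm as `q`, to `q`. Transporting `exp (log (1 - z)) = 1 - z` along this embedding gives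
`exp (-∑ qᵏ⁺¹ / (k + 1)) = 1 - q` on the unit ball, so the series, and with it
`f = -2 + 2 • ∑ qᵏ⁺¹ / (k + 1)`, has a left inverse there.
-/

open Quaternion

theorem Quaternion.exists_mul_self_eq_neg_one_smul_eq_im (q : ℍ[ℝ]) :
    ∃ I : ℍ[ℝ], I * I = -1 ∧ ‖q.im‖ • I = q.im := by
  by_cases h : q.im = 0
  · refine ⟨⟨0, 1, 0, 0⟩, ?_, by rw [h, norm_zero]; exact zero_smul _ _⟩
    erw [QuaternionAlgebra.mk_mul_mk]
    ext <;> simp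
  · have hne : ‖q.im‖ ≠ 0 := norm_ne_zero_iff.mpr h
    refine ⟨‖q.im‖⁻¹ • q.im, ?_, by rw [smul_smul, mul_inv_cancel₀ hne, one_smul]⟩
    rw [smul_mul_smul_comm, ← sq q.im, im_sq, normSq_eq_norm_mul_self, smul_neg, ← coe_smul,
      smul_eq_mul, mul_mul_mul_comm, inv_mul_cancel₀ hne, one_mul, coe_one]

theorem Quaternion.exists_algHom_complex_apply_eq (q : ℍ[ℝ]) :
    ∃ (φ : ℂ →ₐ[ℝ] ℍ[ℝ]) (z : ℂ), φ z = q ∧ ‖z‖ = ‖q‖ := by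
  obtain ⟨I, hI, hIq⟩ := q.exists_mul_self_eq_neg_one_smul_eq_im
  refine ⟨Complex.liftAux I hI, ⟨q.re, ‖q.im‖⟩, ?_, ?_⟩
  · rw [Complex.liftAux_apply, algebraMap_def]
    exact (congrArg _ hIq).trans q.re_add_im
  · rw [← sq_eq_sq₀ (norm_nonneg _) (norm_nonneg _), Complex.sq_norm, Complex.normSq_mk, sq,
      ← normSq_eq_norm_mul_self, ← normSq_eq_norm_mul_self]
    simp only [normSq_def', re_im, imI_im, imJ_im, imK_im]
    ring

open Complex in
theorem AlgHom.exp_neg_tsum_smul_pow_succ {A : Type*} [NormedRing A] [NormedAlgebra ℝ A]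
    (φ : ℂ →ₐ[ℝ] A) {z : ℂ} (hz : ‖z‖ < 1) :
    NormedSpace.exp (-∑' k : ℕ, (1 / ((k : ℝ) + 1)) • φ z ^ (k + 1)) = 1 - φ z := by
  have hφ : Continuous φ := φ.toLinearMap.continuous_of_finiteDimensional
  have hterm (k : ℕ) : z ^ (k + 1) / (k + 1) = (1 / ((k : ℝ) + 1)) • z ^ (k + 1) := by
    rw [real_smul]; push_cast; ring
  have hsum : HasSum (fun k : ℕ => (1 / ((k : ℝ) + 1)) • φ z ^ (k + 1)) (φ (-log (1 - z))) := by
    simpa only [Function.comp_def, hterm, map_smul, map_pow] using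
      (hasSum_taylorSeries_neg_log' hz).map φ hφ
  have hz₁ : 1 - z ≠ 0 := sub_ne_zero.2 fun h => by simp [← h] at hz
  rw [hsum.tsum_eq, map_neg, neg_neg, ← NormedSpace.map_exp_of_mem_ball (𝕂 := ℝ) φ hφ,
    ← exp_eq_exp_ℂ, exp_log hz₁, map_sub, map_one]
  simp [NormedSpace.expSeries_radius_eq_top]

theorem Quaternion.exp_neg_tsum_smul_pow_succ {q : ℍ[ℝ]} (hq : ‖q‖ < 1) :
    NormedSpace.exp (-∑' k : ℕ, (1 / ((k : ℝ) + 1)) • q ^ (k + 1)) = 1 - q := by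
  obtain ⟨φ, z, rfl, hz⟩ := q.exists_algHom_complex_apply_eq
  exact φ.exp_neg_tsum_smul_pow_succ (hz ▸ hq)

theorem Quaternion.injOn_tsum_smul_pow_succ :
    Set.InjOn (fun q : ℍ[ℝ] => ∑' k : ℕ, (1 / ((k : ℝ) + 1)) • q ^ (k + 1))
      (Metric.ball 0 1) :=
  Set.LeftInvOn.injOn (f₁' := fun L => 1 - NormedSpace.exp (-L)) fun q hq => by
    simp only [exp_neg_tsum_smul_pow_succ (mem_ball_zero_iff.1 hq), sub_sub_cancel]

/-- The function `f(q) = -2 + 2 ∑_{k≥1} qᵏ/k` is injective on the open unit ball of the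
quaternions. -/
theorem stmt5 :
    Set.InjOn
      (fun q : Quaternion ℝ => (-2 : Quaternion ℝ) +
        ∑' k : ℕ, (2 / ((k : ℝ) + 1)) • q ^ (k + 1))
      (Metric.ball (0 : Quaternion ℝ) 1) := by
  have htsum (q : ℍ[ℝ]) : ∑' k : ℕ, (2 / ((k : ℝ) + 1)) • q ^ (k + 1) =
      (2 : ℝ) • ∑' k : ℕ, (1 / ((k : ℝ) + 1)) • q ^ (k + 1) := by
    rw [← tsum_const_smul'']
    simp only [smul_smul, mul_one_div]
  intro p hp q hq h
  refine injOn_tsum_smul_pow_succ hp hq (smul_right_injective _ (two_ne_zero (α := ℝ)) ?_)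
  simpa only [htsum, add_right_inj] using h
end

section
/- Let f, g, w be formal power series with quaternionic coefficients, with g(0) = 0, w(0) = 0, and all coefficients of w real. Then the bullet composition is associative in this case: (f • g) • w = f • (g • w). -/
/-- The bullet composition of formal power series over the quaternions:
`(f • w) = ∑_n w^{*n} aₙ` where `f = ∑ qⁿ aₙ`; since the constant coefficient of `w` is
required to be `0` in applications, each coefficient is a finite sum. -/
noncomputable def bulletComp (f w : PowerSeries (Quaternion ℝ)) :
    PowerSeries (Quaternion ℝ) :=
  PowerSeries.mk fun n =>
    ∑ k ∈ Finset.range (n + 1),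
      PowerSeries.coeff n (w ^ k) * PowerSeries.coeff k f

/-!
Since the coefficients of `w` are real, those of every power `w ^ k` are central in `ℍ`, and this
makes `f ↦ f • w` multiplicative; in particular `g ^ k • w = (g • w) ^ k`. Both sides of the
associativity law then expand to `∑ₖ (g ^ k • w) aₖ`, after exchanging two finite sums (finite
because `g` and `w` have zero constant term, so the `n`-th coefficient of `w ^ k` vanishes for
`k > n`).
-/

open Finset PowerSeries
open scoped Quaternion

theorem PowerSeries.coeff_pow_eq_zero_of_lt {R : Type*} [Semiring R] {φ : R⟦X⟧}
    (hφ : coeff 0 φ = 0) {j k : ℕ} (hjk : j < k) : coeff j (φ ^ k) = 0 :=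
  coeff_of_lt_order j <| (Nat.cast_lt.2 hjk).trans_le <|
    le_order_pow_of_constantCoeff_eq_zero k <| by rwa [← coeff_zero_eq_constantCoeff_apply]

theorem Finset.sum_range_sum_antidiagonal_eq_sum_range_sum_range {M : Type*} [AddCommMonoid M]
    (N : ℕ) (F : ℕ → ℕ → M) (hF : ∀ r s, N ≤ r + s → F r s = 0) :
    ∑ k ∈ range N, ∑ p ∈ antidiagonal k, F p.1 p.2 = ∑ r ∈ range N, ∑ s ∈ range N, F r s := by
  simp_rw [Nat.sum_antidiagonal_eq_sum_range_succ F, sum_range_diag_flip]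
  refine sum_congr rfl fun r _ => sum_subset (range_subset_range.2 (Nat.sub_le N r)) ?_
  intro s _ hs
  exact hF r s (by simp only [mem_range] at hs; omega)

theorem commute_coeff_pow_of_coeff_real {w : ℍ[ℝ]⟦X⟧} (hw : ∀ n, ∃ r : ℝ, coeff n w = r)
    (k n : ℕ) (x : ℍ[ℝ]) : Commute (coeff n (w ^ k)) x := by
  have hmap : w = map (algebraMap ℝ ℍ[ℝ]) (mk fun n => (hw n).choose) := by
    ext n : 1
    rw [coeff_map, coeff_mk]
    exact (hw n).choose_spec
  rw [hmap, ← map_pow, coeff_map]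
  exact Algebra.commutes _ x

theorem coeff_bulletComp (f w : ℍ[ℝ]⟦X⟧) (n : ℕ) :
    coeff n (bulletComp f w) = ∑ k ∈ range (n + 1), coeff n (w ^ k) * coeff k f :=
  coeff_mk _ _

theorem bulletComp_one (w : ℍ[ℝ]⟦X⟧) : bulletComp 1 w = 1 := by
  ext n : 1
  simp [coeff_bulletComp, coeff_one]

theorem coeff_bulletComp_eq_sum_range (f : ℍ[ℝ]⟦X⟧) {w : ℍ[ℝ]⟦X⟧} (hw0 : coeff 0 w = 0)
    {n N : ℕ} (hn : n < N) :
    coeff n (bulletComp f w) = ∑ k ∈ range N, coeff n (w ^ k) * coeff k f := by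
  rw [coeff_bulletComp]
  refine sum_subset (range_subset_range.2 hn) fun k _ hk => ?_
  rw [coeff_pow_eq_zero_of_lt hw0 (by simp only [mem_range] at hk; omega), zero_mul]

theorem bulletComp_mul {w : ℍ[ℝ]⟦X⟧} (hw0 : coeff 0 w = 0)
    (hwreal : ∀ n, ∃ r : ℝ, coeff n w = r) (a b : ℍ[ℝ]⟦X⟧) :
    bulletComp (a * b) w = bulletComp a w * bulletComp b w := by
  ext n : 1
  have hcomm := commute_coeff_pow_of_coeff_real hwreal
  calc coeff n (bulletComp (a * b) w)
      = ∑ k ∈ range (n + 1), ∑ p ∈ antidiagonal k,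
          coeff n (w ^ (p.1 + p.2)) * (coeff p.1 a * coeff p.2 b) := by
        rw [coeff_bulletComp]
        refine sum_congr rfl fun k _ => ?_
        rw [coeff_mul, mul_sum]
        exact sum_congr rfl fun p hp => by rw [mem_antidiagonal.1 hp]
    _ = ∑ r ∈ range (n + 1), ∑ s ∈ range (n + 1),
          coeff n (w ^ (r + s)) * (coeff r a * coeff s b) :=
        sum_range_sum_antidiagonal_eq_sum_range_sum_range _
          (fun r s => coeff n (w ^ (r + s)) * (coeff r a * coeff s b)) fun r s h => by
          rw [coeff_pow_eq_zero_of_lt hw0 h, zero_mul]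
    _ = ∑ p ∈ antidiagonal n, ∑ r ∈ range (n + 1), ∑ s ∈ range (n + 1),
          coeff p.1 (w ^ r) * coeff r a * (coeff p.2 (w ^ s) * coeff s b) := by
        have hsplit : ∀ r s, coeff n (w ^ (r + s)) * (coeff r a * coeff s b) =
            ∑ p ∈ antidiagonal n,
              coeff p.1 (w ^ r) * coeff r a * (coeff p.2 (w ^ s) * coeff s b) := by
          intro r s
          rw [pow_add, coeff_mul, sum_mul]
          refine sum_congr rfl fun p _ => ?_
          rw [mul_assoc, mul_assoc, (hcomm s p.2 (coeff r a)).left_comm, ← mul_assoc]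
        simp only [hsplit]
        exact (sum_congr rfl fun r _ => sum_comm).trans sum_comm
    _ = coeff n (bulletComp a w * bulletComp b w) := by
        rw [coeff_mul]
        refine sum_congr rfl fun p hp => ?_
        have hp := mem_antidiagonal.1 hp
        have h1 : p.1 < n + 1 := by omega
        have h2 : p.2 < n + 1 := by omega
        rw [coeff_bulletComp_eq_sum_range a hw0 h1, coeff_bulletComp_eq_sum_range b hw0 h2,
          sum_mul_sum]

theorem bulletComp_pow {w : ℍ[ℝ]⟦X⟧} (hw0 : coeff 0 w = 0)
    (hwreal : ∀ n, ∃ r : ℝ, coeff n w = r) (g : ℍ[ℝ]⟦X⟧) (k : ℕ) :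
    bulletComp (g ^ k) w = bulletComp g w ^ k := by
  induction k with
  | zero => simpa using bulletComp_one w
  | succ k ih => rw [pow_succ, pow_succ, bulletComp_mul hw0 hwreal, ih]

/-- Associativity of bullet composition when the innermost series `w` has real coefficients:
`(f • g) • w = f • (g • w)`. -/
theorem stmt9 (f g w : PowerSeries (Quaternion ℝ))
    (hg0 : PowerSeries.coeff 0 g = 0)
    (hw0 : PowerSeries.coeff 0 w = 0)
    (hwreal : ∀ n : ℕ, ∃ r : ℝ, PowerSeries.coeff n w = (r : Quaternion ℝ)) :
    bulletComp (bulletComp f g) w = bulletComp f (bulletComp g w) := by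
  ext n : 1
  calc coeff n (bulletComp (bulletComp f g) w)
      = ∑ j ∈ range (n + 1), ∑ k ∈ range (n + 1),
          coeff n (w ^ j) * coeff j (g ^ k) * coeff k f := by
        rw [coeff_bulletComp]
        refine sum_congr rfl fun j hj => ?_
        rw [coeff_bulletComp_eq_sum_range f hg0 (mem_range.1 hj), mul_sum]
        simp only [mul_assoc]
    _ = ∑ k ∈ range (n + 1), coeff n (bulletComp (g ^ k) w) * coeff k f := by
        rw [sum_comm]
        simp only [coeff_bulletComp, sum_mul]
    _ = coeff n (bulletComp f (bulletComp g w)) := by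
        simp only [bulletComp_pow hw0 hwreal, coeff_bulletComp]
end

section
/- Bullet composition fails to be associative in general: taking f(q) = q² c, g(q) = q a, w(q) = q² b with quaternions a, b, c, one has ((f • g) • w)(q) = q⁴ b² a² c while (f • (g • w))(q) = q⁴ (bab a) c; in particular, there exist quaternions a, b, c for which (f • g) • w ≠ f • (g • w). -/
/-- Unlike `PowerSeries.monomial_pow`, this needs no commutativity. -/
theorem PowerSeries.monomial_pow_of_semiring {R : Type*} [Semiring R] (d : ℕ) (b : R) (k : ℕ) :
    monomial d b ^ k = monomial (k * d) (b ^ k) := by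
  induction k with
  | zero => simp
  | succ k ih => rw [pow_succ, ih, monomial_mul_monomial, pow_succ, add_one_mul]

theorem bulletComp_monomial_monomial (m d : ℕ) (hd : d ≠ 0) (c b : Quaternion ℝ) :
    bulletComp (PowerSeries.monomial m c) (PowerSeries.monomial d b)
      = PowerSeries.monomial (m * d) (b ^ m * c) := by
  refine PowerSeries.ext fun n => ?_
  rw [bulletComp, PowerSeries.coeff_mk, Finset.sum_eq_single m]
  · simp only [PowerSeries.monomial_pow_of_semiring, PowerSeries.coeff_monomial, ite_mul,
      zero_mul, if_true]
  · intro k _ hk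
    simp [PowerSeries.coeff_monomial, hk]
  · intro hm
    have hn : n ≠ m * d := by
      have := Nat.le_mul_of_pos_right m (Nat.pos_of_ne_zero hd)
      simp only [Finset.mem_range, not_lt] at hm
      omega
    simp [PowerSeries.monomial_pow_of_semiring, PowerSeries.coeff_monomial, hn]

theorem bulletComp_bulletComp_monomial (m d e : ℕ) (hd : d ≠ 0) (he : e ≠ 0)
    (a b c : Quaternion ℝ) :
    bulletComp (bulletComp (PowerSeries.monomial m c) (PowerSeries.monomial d a))
        (PowerSeries.monomial e b)
      = PowerSeries.monomial (m * d * e) (b ^ (m * d) * a ^ m * c) := by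
  rw [bulletComp_monomial_monomial m d hd, bulletComp_monomial_monomial _ e he,
    ← mul_assoc (b ^ (m * d))]

theorem bulletComp_monomial_bulletComp (m d e : ℕ) (hd : d ≠ 0) (he : e ≠ 0)
    (a b c : Quaternion ℝ) :
    bulletComp (PowerSeries.monomial m c)
        (bulletComp (PowerSeries.monomial d a) (PowerSeries.monomial e b))
      = PowerSeries.monomial (m * d * e) ((b ^ d * a) ^ m * c) := by
  rw [bulletComp_monomial_monomial d e he, bulletComp_monomial_monomial m _ (mul_ne_zero hd he),
    mul_assoc]

/-- With `a = i`, `b = j`: `j² i² = 1`, whereas `j i j i = (-k)² = -1`. -/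
theorem Quaternion.exists_sq_mul_sq_ne_mul_mul_mul :
    ∃ a b : Quaternion ℝ, b ^ 2 * a ^ 2 ≠ b * a * b * a := by
  let q : QuaternionAlgebra.Basis (Quaternion ℝ) (-1 : ℝ) 0 (-1) := .self ℝ
  refine ⟨q.i, q.j, fun h => ?_⟩
  have hre := congrArg QuaternionAlgebra.re h
  norm_num [sq, Quaternion.re_one] at hre

/-- Non-associativity of bullet composition: with `f = q² c`, `g = q a`, `w = q² b` one has
`(f • g) • w = q⁴ b² a² c` and `f • (g • w) = q⁴ (b a b a) c`, and these differ for suitable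
quaternions `a`, `b`, `c`. -/
theorem stmt10 :
    (∀ a b c : Quaternion ℝ,
      bulletComp (bulletComp (PowerSeries.monomial 2 c)
          (PowerSeries.monomial 1 a)) (PowerSeries.monomial 2 b)
        = PowerSeries.monomial 4 (b ^ 2 * a ^ 2 * c) ∧
      bulletComp (PowerSeries.monomial 2 c)
          (bulletComp (PowerSeries.monomial 1 a)
            (PowerSeries.monomial 2 b))
        = PowerSeries.monomial 4 (b * a * b * a * c)) ∧
    ∃ a b c : Quaternion ℝ,
      bulletComp (bulletComp (PowerSeries.monomial 2 c)
          (PowerSeries.monomial 1 a)) (PowerSeries.monomial 2 b)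
        ≠ bulletComp (PowerSeries.monomial 2 c)
          (bulletComp (PowerSeries.monomial 1 a)
            (PowerSeries.monomial 2 b)) := by
  have hleft (a b c : Quaternion ℝ) :=
    bulletComp_bulletComp_monomial 2 1 2 one_ne_zero two_ne_zero a b c
  have hright (a b c : Quaternion ℝ) :=
    bulletComp_monomial_bulletComp 2 1 2 one_ne_zero two_ne_zero a b c
  refine ⟨fun a b c => ⟨hleft a b c, ?_⟩, ?_⟩
  · rw [hright, pow_one, sq, ← mul_assoc (b * a) b a]
  · obtain ⟨a, b, hab⟩ := Quaternion.exists_sq_mul_sq_ne_mul_mul_mul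
    refine ⟨a, b, 1, fun h => hab ?_⟩
    rw [hleft, hright] at h
    simpa [sq, mul_assoc] using congrArg (PowerSeries.coeff 4) h
end

section
/- Let f, g be quaternionic power series converging on B(0;1), and suppose f(q) = g(w(q)) for some power series w with real coefficients, w(0)=0, and ‖w(q)‖ < 1 on B(0;1) (i.e., f ≺_𝒩 g). Then f(0) = g(0) and ‖f'(0)‖ ≤ ‖g'(0)‖. -/
/-!
On the real line `f`, `g` and `w` restrict to real-analytic functions with `f = g ∘ w`, so the
chain rule at `0` gives `a₀ = b₀` and `a₁ = c₁ b₁`. On the complex slice `ℂ ⊆ ℍ`, which the real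
coefficients of `w` preserve, `w` is a holomorphic self-map of the unit disc fixing `0`, hence
`|c₁| ≤ 1` by the Schwarz lemma.
-/

open Filter Topology NNReal

namespace FormalMultilinearSeries

variable {𝕜 E : Type*} [NontriviallyNormedField 𝕜] [NormedAddCommGroup E] [NormedSpace 𝕜 E]

variable (𝕜) in
noncomputable def ofCoeff (v : ℕ → E) : FormalMultilinearSeries 𝕜 𝕜 E :=
  fun n => ContinuousMultilinearMap.mkPiRing 𝕜 (Fin n) (v n)

@[simp]
theorem coeff_ofCoeff (v : ℕ → E) (n : ℕ) : (ofCoeff 𝕜 v).coeff n = v n := by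
  simp [coeff, ofCoeff]

theorem sum_ofCoeff (v : ℕ → E) (x : 𝕜) : (ofCoeff 𝕜 v).sum x = ∑' n, x ^ n • v n := by
  simp [FormalMultilinearSeries.sum]

theorem one_le_radius_ofCoeff {v : ℕ → E}
    (hv : ∀ r : ℝ≥0, r < 1 → Tendsto (fun n => ‖v n‖ * r ^ n) atTop (𝓝 0)) :
    1 ≤ (ofCoeff 𝕜 v).radius :=
  ENNReal.le_of_forall_nnreal_lt fun r hr =>
    (ofCoeff 𝕜 v).le_radius_of_tendsto (by simpa using hv r (mod_cast hr))

theorem sum_zero_eq_coeff_zero (p : FormalMultilinearSeries 𝕜 𝕜 E) : p.sum 0 = p.coeff 0 := by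
  rw [FormalMultilinearSeries.sum, tsum_eq_single 0 fun n hn => by simp [hn]]
  simp

variable {p q : FormalMultilinearSeries 𝕜 𝕜 E} {w : FormalMultilinearSeries 𝕜 𝕜 𝕜}

theorem coeff_zero_eq_of_sum_eventuallyEq_comp (hw0 : w.coeff 0 = 0)
    (h : p.sum =ᶠ[𝓝 0] q.sum ∘ w.sum) : p.coeff 0 = q.coeff 0 := by
  rw [← sum_zero_eq_coeff_zero, ← sum_zero_eq_coeff_zero, h.eq_of_nhds, Function.comp_apply,
    sum_zero_eq_coeff_zero w, hw0]

theorem coeff_one_eq_smul_of_sum_eventuallyEq_comp [CompleteSpace 𝕜] [CompleteSpace E]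
    (hp : 0 < p.radius) (hq : 0 < q.radius) (hw : 0 < w.radius) (hw0 : w.coeff 0 = 0)
    (h : p.sum =ᶠ[𝓝 0] q.sum ∘ w.sum) : p.coeff 1 = w.coeff 1 • q.coeff 1 := by
  have hq' : HasDerivAt q.sum (q.coeff 1) (w.sum 0) := by
    rw [sum_zero_eq_coeff_zero, hw0]
    exact (q.hasFPowerSeriesOnBall hq).hasFPowerSeriesAt.hasDerivAt
  exact (p.hasFPowerSeriesOnBall hp).hasFPowerSeriesAt.hasDerivAt.unique <|
    (hq'.scomp 0 (w.hasFPowerSeriesOnBall hw).hasFPowerSeriesAt.hasDerivAt).congr_of_eventuallyEq h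

open Metric in
theorem norm_coeff_one_le_one {F : Type*} [NormedAddCommGroup F] [NormedSpace ℂ F]
    [CompleteSpace F] {p : FormalMultilinearSeries ℂ ℂ F} (hp : 1 ≤ p.radius) (h0 : p.coeff 0 = 0)
    (hle : ∀ z : ℂ, ‖z‖ < 1 → ‖p.sum z‖ ≤ 1) :
    ‖p.coeff 1‖ ≤ 1 := by
  have hf : HasFPowerSeriesOnBall p.sum p 0 1 :=
    (p.hasFPowerSeriesOnBall (zero_lt_one.trans_le hp)).mono one_pos hp
  have hd : DifferentiableOn ℂ p.sum (ball 0 1) := by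
    simpa [← ENNReal.coe_one, eball_coe] using hf.differentiableOn
  have hmaps : Set.MapsTo p.sum (ball 0 1) (closedBall (p.sum 0) 1) := fun z hz => by
    simpa [sum_zero_eq_coeff_zero, h0] using hle z (mem_ball_zero_iff.mp hz)
  simpa [hf.hasFPowerSeriesAt.deriv] using Complex.norm_deriv_le_one_of_mapsTo_ball hd hmaps one_pos

end FormalMultilinearSeries

namespace Quaternion

theorem norm_coeComplex (z : ℂ) : ‖(z : ℍ)‖ = ‖z‖ := by
  rw [norm_eq_sqrt_real_inner, inner_self, normSq_def', Complex.norm_def, Complex.normSq_apply]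
  simp [sq]

theorem tsum_coeComplex {α : Type*} (f : α → ℂ) : ∑' a, (f a : ℍ) = ↑(∑' a, f a) :=
  ((AddMonoidHomClass.isometry_of_norm ofComplex norm_coeComplex).isClosedEmbedding.map_tsum
    f).symm

theorem tsum_coe_pow_mul (v : ℕ → ℍ) (t : ℝ) : ∑' n, (t : ℍ) ^ n * v n = ∑' n, t ^ n • v n := by
  simp only [← coe_pow, coe_mul_eq_smul]

theorem tsum_smul_coe_pow (c : ℕ → ℝ) (t : ℝ) :
    ∑' n, c n • (t : ℍ) ^ n = ↑(∑' n, t ^ n • c n) := by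
  simp only [← tsum_coe, ← coe_pow, ← coe_smul, smul_eq_mul, mul_comm]

theorem tsum_smul_coeComplex_pow (c : ℕ → ℝ) (z : ℂ) :
    ∑' n, c n • (z : ℍ) ^ n = ↑(∑' n, z ^ n • (c n : ℂ)) := by
  refine (tsum_congr fun n => ?_).trans (tsum_coeComplex _)
  rw [smul_eq_mul, mul_comm, ← Complex.real_smul, ← coe_ofComplex, map_smul, map_pow]

theorem tendsto_norm_mul_pow_of_summable {v : ℕ → ℍ}
    (hv : ∀ q : ℍ, ‖q‖ < 1 → Summable fun n => q ^ n * v n) (r : ℝ≥0) (hr : r < 1) :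
    Tendsto (fun n => ‖v n‖ * r ^ n) atTop (𝓝 0) := by
  simpa [mul_comm] using (hv r (by simpa using hr)).tendsto_atTop_zero.norm

end Quaternion

open FormalMultilinearSeries Quaternion in
/-- Subordination: if `f(q) = ∑ qⁿ aₙ` and `g(q) = ∑ qⁿ bₙ` converge on the unit ball and
`f = g ∘ w` for a power series `w` with real coefficients, `w(0) = 0`, `‖w(q)‖ < 1` on the
ball, then `f(0) = g(0)` and `‖f'(0)‖ ≤ ‖g'(0)‖`, i.e. `a₀ = b₀` and `‖a₁‖ ≤ ‖b₁‖`. -/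
theorem stmt16 (a b : ℕ → Quaternion ℝ)
    (hfa : ∀ q : Quaternion ℝ, ‖q‖ < 1 → Summable (fun n : ℕ => q ^ n * a n))
    (hgb : ∀ q : Quaternion ℝ, ‖q‖ < 1 → Summable (fun n : ℕ => q ^ n * b n))
    (c : ℕ → ℝ) (hc0 : c 0 = 0)
    (hw : ∀ q : Quaternion ℝ, ‖q‖ < 1 → Summable (fun n : ℕ => c n • q ^ n))
    (hwlt : ∀ q : Quaternion ℝ, ‖q‖ < 1 → ‖∑' n : ℕ, c n • q ^ n‖ < 1)
    (hsub : ∀ q : Quaternion ℝ, ‖q‖ < 1 →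
      (∑' n : ℕ, q ^ n * a n) = ∑' n : ℕ, (∑' m : ℕ, c m • q ^ m) ^ n * b n) :
    a 0 = b 0 ∧ ‖a 1‖ ≤ ‖b 1‖ := by
  have hc : ∀ q : ℍ, ‖q‖ < 1 → Summable fun n => q ^ n * (c n : ℍ) := fun q hq => by
    simpa only [← coe_mul_eq_smul, coe_commutes] using hw q hq
  have hc_growth := tendsto_norm_mul_pow_of_summable hc
  have ha_rad := one_le_radius_ofCoeff (𝕜 := ℝ) (tendsto_norm_mul_pow_of_summable hfa)
  have hb_rad := one_le_radius_ofCoeff (𝕜 := ℝ) (tendsto_norm_mul_pow_of_summable hgb)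
  have hc_rad := one_le_radius_ofCoeff (𝕜 := ℝ) (v := c) (by simpa using hc_growth)
  have hcℂ_rad :=
    one_le_radius_ofCoeff (𝕜 := ℂ) (v := fun n => (c n : ℂ)) (by simpa using hc_growth)
  have hc_coeff_zero : (ofCoeff ℝ c).coeff 0 = 0 := by rw [coeff_ofCoeff, hc0]
  have hcomp : (ofCoeff ℝ a).sum =ᶠ[𝓝 0] (ofCoeff ℝ b).sum ∘ (ofCoeff ℝ c).sum := by
    filter_upwards [Metric.ball_mem_nhds (0 : ℝ) one_pos] with t ht
    have := hsub t (by simpa using ht)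
    rwa [tsum_smul_coe_pow, tsum_coe_pow_mul, tsum_coe_pow_mul, ← sum_ofCoeff, ← sum_ofCoeff,
      ← sum_ofCoeff] at this
  have hc1 := norm_coeff_one_le_one hcℂ_rad (by simpa using hc0) fun z hz => by
    rw [sum_ofCoeff, ← norm_coeComplex, ← tsum_smul_coeComplex_pow]
    exact (hwlt z (by rwa [norm_coeComplex])).le
  have h1 := coeff_one_eq_smul_of_sum_eventuallyEq_comp (one_pos.trans_le ha_rad)
    (one_pos.trans_le hb_rad) (one_pos.trans_le hc_rad) hc_coeff_zero hcomp
  simp only [coeff_ofCoeff, Complex.norm_real] at h1 hc1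
  refine ⟨by simpa using coeff_zero_eq_of_sum_eventuallyEq_comp hc_coeff_zero hcomp, ?_⟩
  rw [h1, norm_smul]
  exact mul_le_of_le_one_left (norm_nonneg _) hc1
end
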